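/- arXiv:math/0102219 — 3 statements merged into one kernel-verified Lean document; each statement's English description precedes it below -/
import Mathlib

section
/- Let f : (−∞, s₀] → ℝ be a nonnegative C² function with f ∈ L²((−∞, s₀], ds), satisfying f'' ≥ k² f for some k > 0. Then f is convex and f(s) = O(e^{k s}) as s → −∞. -/
open Set MeasureTheory Filter

/-- A nonnegative `C²` function `f ∈ L²((-∞, s₀])` with
`f'' ≥ k² f` (`k > 0`) is convex on `(-∞, s₀]` and satisfies `f(s) = O(e^{ks})`
as `s → -∞`. -/
theorem differential_inequality_decay
    (s₀ k : ℝ) (hk : 0 < k) (f : ℝ → ℝ)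
    (hf : ContDiffOn ℝ 2 f (Set.Iic s₀))
    (hfpos : ∀ s ∈ Set.Iic s₀, 0 ≤ f s)
    (hL2 : IntegrableOn (fun s => f s ^ 2) (Set.Iic s₀))
    (hineq : ∀ s ∈ Set.Iic s₀, k ^ 2 * f s ≤ deriv (deriv f) s) :
    ConvexOn ℝ (Set.Iic s₀) f ∧
    ∃ C > (0:ℝ), ∀ s ∈ Set.Iic s₀, f s ≤ C * Real.exp (k * s) := by
  have hsub : Iio s₀ ⊆ Iic s₀ := Iio_subset_Iic_self
  have hfc : ContinuousOn f (Iic s₀) := hf.continuousOn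
  have hfU : ContDiffOn ℝ 2 f (Iio s₀) := hf.mono hsub
  have hdfU : DifferentiableOn ℝ f (Iio s₀) := hfU.differentiableOn (by norm_num)
  have hdfa : ∀ x ∈ Iio s₀, DifferentiableAt ℝ f x := fun x hx =>
    (hdfU x hx).differentiableAt (isOpen_Iio.mem_nhds hx)
  have hdf'U : ContDiffOn ℝ 1 (deriv f) (Iio s₀) := by
    exact hfU.deriv_of_isOpen isOpen_Iio (m := 1) (by norm_num)
  have hdf'a : ∀ x ∈ Iio s₀, DifferentiableAt ℝ (deriv f) x := fun x hx =>
    ((hdf'U.differentiableOn (by norm_num)) x hx).differentiableAt (isOpen_Iio.mem_nhds hx)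
  have hcont' : ContinuousOn (deriv f) (Iio s₀) := hdf'U.continuousOn
  have hf''0 : ∀ x ∈ Iic s₀, 0 ≤ deriv (deriv f) x := fun x hx =>
    le_trans (by have := hfpos x hx; positivity) (hineq x hx)
  -- f' is monotone on Iio s₀
  have hmono' : MonotoneOn (deriv f) (Iio s₀) := by
    refine monotoneOn_of_deriv_nonneg (convex_Iio _) hcont' ?_ ?_
    · rw [interior_Iio]; exact fun x hx => (hdf'a x hx).differentiableWithinAt
    · rw [interior_Iio]; exact fun x hx => hf''0 x (hsub hx)
  -- claim: f' ≥ 0 on Iio s₀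
  have hf'0 : ∀ x ∈ Iio s₀, 0 ≤ deriv f x := by
    intro a ha
    by_contra hneg
    push_neg at hneg
    -- f t ≥ f a + (-deriv f a) * (a - t) for t ≤ a
    set ε : ℝ := -deriv f a with hε
    have hε0 : 0 < ε := by simp [hε]; linarith
    have hanti : AntitoneOn (fun x => f x - deriv f a * x) (Iic a) := by
      refine antitoneOn_of_deriv_nonpos (convex_Iic _) ?_ ?_ ?_
      · exact (hfc.mono (Iic_subset_Iic.2 (mem_Iio.1 ha).le)).sub
          ((continuous_const.mul continuous_id).continuousOn)
      · rw [interior_Iic]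
        intro x hx
        exact ((hdfa x (mem_Iio.2 ((mem_Iio.1 hx).trans (mem_Iio.1 ha)))).sub
          ((differentiableAt_id.const_mul _))).differentiableWithinAt
      · rw [interior_Iic]
        intro x hx
        have hxU : x ∈ Iio s₀ := mem_Iio.2 ((mem_Iio.1 hx).trans (mem_Iio.1 ha))
        have hid : HasDerivAt (fun y => deriv f a * y) (deriv f a) x := by
          simpa using (hasDerivAt_id x).const_mul (deriv f a)
        have hD := ((hdfa x hxU).hasDerivAt.fun_sub hid)
        rw [hD.deriv]
        have := hmono' hxU ha (mem_Iio.1 hx).le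
        linarith
    have hlin : ∀ t ≤ a, f a + ε * (a - t) ≤ f t := by
      intro t ht
      have := hanti (mem_Iic.2 ht) (mem_Iic.2 le_rfl) ht
      simp only [hε] at *
      nlinarith
    -- so f ≥ 1 on Iic b
    set b : ℝ := min a (a - (1 - f a) / ε) with hb
    have hba : b ≤ a := min_le_left _ _
    have hge1 : ∀ t ≤ b, (1:ℝ) ≤ f t := by
      intro t ht
      have h1 : t ≤ a := ht.trans hba
      have h2 : t ≤ a - (1 - f a) / ε := ht.trans (min_le_right _ _)
      have := hlin t h1
      have : (1 - f a) / ε ≤ a - t := by linarith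
      have h3 : 1 - f a ≤ ε * (a - t) := by
        rw [div_le_iff₀ hε0] at this; linarith
      linarith [hlin t h1]
    -- contradiction with L²
    have hInt : IntegrableOn (fun s => f s ^ 2) (Iic b) :=
      hL2.mono_set (Iic_subset_Iic.2 (hba.trans ha.le))
    have hIone : IntegrableOn (fun _ : ℝ => (1:ℝ)) (Iic b) := by
      refine Integrable.mono' hInt aestronglyMeasurable_const ?_
      refine (ae_restrict_iff' measurableSet_Iic).2 (ae_of_all _ fun t ht => ?_)
      have := hge1 t ht
      have : (1:ℝ) ≤ f t ^ 2 := by nlinarith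
      simpa [abs_of_nonneg] using this
    have := (integrableOn_const_iff (C := (1:ℝ)) (s := Iic b) (μ := volume)).1 hIone
    rcases this with h | h
    · norm_num at h
    · rw [Real.volume_Iic] at h; exact (lt_irrefl _ h).elim
  -- f is monotone on Iic s₀
  have hfmono : MonotoneOn f (Iic s₀) := by
    refine monotoneOn_of_deriv_nonneg (convex_Iic _) hfc ?_ ?_
    · rw [interior_Iic]; exact hdfU
    · rw [interior_Iic]; exact hf'0
  -- convexity
  have hconv : ConvexOn ℝ (Iic s₀) f := by
    refine convexOn_of_deriv2_nonneg (convex_Iic _) hfc ?_ ?_ ?_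
    · rw [interior_Iic]; exact hdfU
    · rw [interior_Iic]; exact fun x hx => (hdf'a x hx).differentiableWithinAt
    · rw [interior_Iic]
      intro x hx
      have : deriv^[2] f x = deriv (deriv f) x := by
        simp [Function.iterate_succ, Function.iterate_one]
      rw [this]
      exact hf''0 x (hsub hx)
  refine ⟨hconv, ?_⟩
  -- G := e^{ks}(f' - k f) is monotone on Iio s₀
  set G : ℝ → ℝ := fun s => Real.exp (k * s) * (deriv f s - k * f s) with hG
  have hGderiv : ∀ x ∈ Iio s₀, HasDerivAt G
      (Real.exp (k * x) * (deriv (deriv f) x - k ^ 2 * f x)) x := by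
    intro x hx
    have h1 : HasDerivAt (fun s => Real.exp (k * s)) (k * Real.exp (k * x)) x := by
      have := (Real.hasDerivAt_exp (k * x)).comp x ((hasDerivAt_id x).const_mul k)
      simpa [mul_comm, Function.comp_def] using this
    have h2 : HasDerivAt f (deriv f x) x := (hdfa x hx).hasDerivAt
    have h3 : HasDerivAt (deriv f) (deriv (deriv f) x) x := (hdf'a x hx).hasDerivAt
    have h4 : HasDerivAt (fun s => deriv f s - k * f s) (deriv (deriv f) x - k * deriv f x) x :=
      h3.sub (h2.const_mul k)
    have := h1.fun_mul h4
    refine this.congr_deriv ?_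
    ring
  have hGmono : MonotoneOn G (Iio s₀) := by
    refine monotoneOn_of_deriv_nonneg (convex_Iio _) ?_ ?_ ?_
    · intro x hx; exact (hGderiv x hx).continuousAt.continuousWithinAt
    · rw [interior_Iio]; exact fun x hx => (hGderiv x hx).differentiableAt.differentiableWithinAt
    · rw [interior_Iio]
      intro x hx
      rw [(hGderiv x hx).deriv]
      have := hineq x (hsub hx)
      have := Real.exp_pos (k * x)
      nlinarith
  -- G ≥ 0 on Iio s₀
  have hG0 : ∀ x ∈ Iio s₀, 0 ≤ G x := by
    intro s hs
    by_contra hneg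
    push_neg at hneg
    set c : ℝ := -G s / k with hc
    have hc0 : 0 < c := by
      apply div_pos; linarith; exact hk
    -- for t ≤ s, f t ≥ c * exp (-k t)
    have hlow : ∀ t ≤ s, c * Real.exp (-(k * t)) ≤ f t := by
      intro t ht
      have htU : t ∈ Iio s₀ := lt_of_le_of_lt ht hs
      have hGt : G t ≤ G s := hGmono htU hs ht
      have hf't : 0 ≤ deriv f t := hf'0 t htU
      have hexp : 0 < Real.exp (k * t) := Real.exp_pos _
      -- exp(kt)(f' t - k f t) ≤ G s, f' t ≥ 0 ⇒ -k f t * exp(kt) ≤ G s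
      have h1 : -(k * f t) * Real.exp (k * t) ≤ G s := by
        have : Real.exp (k * t) * (deriv f t - k * f t) ≤ G s := hGt
        nlinarith
      have h2 : -G s ≤ k * f t * Real.exp (k * t) := by linarith
      have hexp2 : 0 < Real.exp (-(k * t)) := Real.exp_pos _
      have hcle : c ≤ f t * Real.exp (k * t) := by
        rw [hc, div_le_iff₀ hk]; nlinarith
      calc c * Real.exp (-(k * t)) ≤ (f t * Real.exp (k * t)) * Real.exp (-(k * t)) :=
            mul_le_mul_of_nonneg_right hcle hexp2.le
        _ = f t := by rw [mul_assoc, ← Real.exp_add]; simp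
    -- but f t ≤ f s₀, while c * exp(-kt) → ∞
    have htend : Tendsto (fun t : ℝ => c * Real.exp (-(k * t))) atBot atTop := by
      apply Tendsto.const_mul_atTop hc0
      apply Real.tendsto_exp_atTop.comp
      have : Tendsto (fun t : ℝ => k * t) atBot atBot :=
        (tendsto_const_mul_atBot_of_pos hk).2 tendsto_id
      exact tendsto_neg_atBot_atTop.comp this
    have hev : ∀ᶠ t in atBot, f s₀ + 1 ≤ c * Real.exp (-(k * t)) :=
      htend.eventually_ge_atTop _
    have hev2 : ∀ᶠ t in (atBot : Filter ℝ), t ≤ s := eventually_le_atBot s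
    rcases (hev.and hev2).exists with ⟨t, h1, h2⟩
    have hts : t ≤ s₀ := le_of_lt (lt_of_le_of_lt h2 (mem_Iio.1 hs))
    have h3 : f t ≤ f s₀ := hfmono (mem_Iic.2 hts) (mem_Iic.2 le_rfl) hts
    have h4 := hlow t h2
    linarith
  -- hence f' - k f ≥ 0 on Iio s₀, so e^{-ks} f is monotone
  have hFmono : MonotoneOn (fun s => Real.exp (-(k * s)) * f s) (Iic s₀) := by
    refine monotoneOn_of_deriv_nonneg (convex_Iic _) ?_ ?_ ?_
    · exact (Real.continuous_exp.comp (continuous_const.mul continuous_id).neg).continuousOn.mul hfc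
    · rw [interior_Iic]
      intro x hx
      exact (((Real.differentiable_exp.differentiableAt).comp x
        (((differentiableAt_id.const_mul k)).neg)).mul (hdfa x hx)).differentiableWithinAt
    · rw [interior_Iic]
      intro x hx
      have hE : HasDerivAt (fun s => Real.exp (-(k * s))) (-k * Real.exp (-(k * x))) x := by
        have := (Real.hasDerivAt_exp (-(k * x))).comp x (((hasDerivAt_id x).const_mul k).neg)
        simpa [mul_comm, Function.comp_def] using this
      have hD := hE.fun_mul (hdfa x hx).hasDerivAt
      rw [hD.deriv]
      have hGx : 0 ≤ Real.exp (k * x) * (deriv f x - k * f x) := hG0 x hx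
      have hexp1 : 0 < Real.exp (k * x) := Real.exp_pos _
      have hexp2 : 0 < Real.exp (-(k * x)) := Real.exp_pos _
      have hkey : (0:ℝ) ≤ deriv f x - k * f x :=
        le_of_mul_le_mul_left (by linarith [hGx]) hexp1
      nlinarith [mul_nonneg hexp2.le hkey]
  refine ⟨Real.exp (-(k * s₀)) * f s₀ + 1, ?_, ?_⟩
  · have h0 := hfpos s₀ (mem_Iic.2 le_rfl)
    have := Real.exp_pos (-(k * s₀))
    nlinarith
  intro s hs
  have hmm : Real.exp (-(k * s)) * f s ≤ Real.exp (-(k * s₀)) * f s₀ :=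
    hFmono (mem_Iic.2 hs) (mem_Iic.2 le_rfl) hs
  have hexp : 0 < Real.exp (k * s) := Real.exp_pos _
  have h1 : Real.exp (k * s) * (Real.exp (-(k * s)) * f s)
      ≤ Real.exp (k * s) * (Real.exp (-(k * s₀)) * f s₀) :=
    mul_le_mul_of_nonneg_left hmm hexp.le
  have h2 : Real.exp (k * s) * (Real.exp (-(k * s)) * f s) = f s := by
    rw [← mul_assoc, ← Real.exp_add]; simp
  nlinarith [h1, h2, hexp]
end

section
/- Let f : (−∞, s₀] → ℝ be nonnegative, C², convex, square-integrable, and satisfy f'' ≥ k² f with k > 0. Then for every j > 0 with j < k, we have e^{−j s} f(s) → 0 as s → −∞. -/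
open Set Filter MeasureTheory

/-- If `f` is nonnegative, `C²`, convex, square-integrable on
`(-∞, s₀]`, and `f'' ≥ k² f` with `k > 0`, then for every `0 < j < k`,
`e^{-js} f(s) → 0` as `s → -∞`. -/
theorem exponential_decay_all_orders
    (s₀ k : ℝ) (hk : 0 < k) (f : ℝ → ℝ)
    (hf : ContDiffOn ℝ 2 f (Set.Iic s₀))
    (hfpos : ∀ s ∈ Set.Iic s₀, 0 ≤ f s)
    (hconv : ConvexOn ℝ (Set.Iic s₀) f)
    (hL2 : IntegrableOn (fun s => f s ^ 2) (Set.Iic s₀))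
    (hineq : ∀ s ∈ Set.Iic s₀, k ^ 2 * f s ≤ deriv (deriv f) s) :
    ∀ j : ℝ, 0 < j → j < k →
      Tendsto (fun s => Real.exp (-j * s) * f s) atBot (nhds 0) := by
  intro j hj hjk
  -- basic differentiability facts on the open set Iio s₀
  have hfo : ContDiffOn ℝ 2 f (Iio s₀) := hf.mono Iio_subset_Iic_self
  have hdiff : ∀ x ∈ Iio s₀, DifferentiableAt ℝ f x := by
    intro x hx
    exact (hfo.differentiableOn (by norm_num)).differentiableAt (isOpen_Iio.mem_nhds hx)
  have hf' : ContDiffOn ℝ 1 (deriv f) (Iio s₀) := by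
    have := hfo.deriv_of_isOpen isOpen_Iio (m := 1) (by norm_num)
    exact this
  have hdiff' : ∀ x ∈ Iio s₀, DifferentiableAt ℝ (deriv f) x := by
    intro x hx
    exact (hf'.differentiableOn (by norm_num)).differentiableAt (isOpen_Iio.mem_nhds hx)
  -- Step A : deriv f ≥ 0 on Iio s₀
  have hderiv_nonneg : ∀ a ∈ Iio s₀, 0 ≤ deriv f a := by
    intro a ha
    by_contra hneg
    push_neg at hneg
    set c := -deriv f a with hc
    have hc0 : 0 < c := by simp [hc]; linarith
    set S : ℝ := a - 1 / c with hS
    have hSa : S < a := by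
      have : 0 < 1 / c := by positivity
      simp only [hS]; linarith
    -- lower bound f x ≥ 1 for x ≤ S
    have hlow : ∀ x ≤ S, 1 ≤ f x := by
      intro x hx
      have hxa : x < a := lt_of_le_of_lt hx hSa
      have hxS : x ∈ Iic s₀ := le_of_lt (hxa.trans ha)
      have hslope := hconv.slope_le_deriv hxS (Set.mem_Iic.mpr ha.le) hxa (hdiff a ha)
      rw [slope_def_field] at hslope
      have hax : 0 < a - x := by linarith
      have hfafx : f a - f x ≤ deriv f a * (a - x) := by
        have := (div_le_iff₀ hax).mp hslope
        linarith
      have hfa : 0 ≤ f a := hfpos a (Set.mem_Iic.mpr ha.le)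
      have : f x ≥ c * (a - x) := by
        simp only [hc] at *
        nlinarith [hfafx]
      have hax1 : 1 / c ≤ a - x := by
        have : x ≤ a - 1 / c := hx
        linarith
      have : c * (a - x) ≥ 1 := by
        rw [ge_iff_le, ← div_le_iff₀' hc0]
        exact hax1
      linarith
    -- contradiction with integrability
    have has₀ : a < s₀ := ha
    have hint : IntegrableOn (fun s => f s ^ 2) (Iic S) :=
      hL2.mono_set (Iic_subset_Iic.mpr (by linarith))
    have hconst : Integrable (fun _ : ℝ => (1 : ℝ)) (volume.restrict (Iic S)) := by
      refine hint.mono' aestronglyMeasurable_const ?_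
      rw [ae_restrict_iff' measurableSet_Iic]
      filter_upwards with x hx
      have h1 := hlow x hx
      have : (1:ℝ) ≤ f x ^ 2 := by nlinarith
      simpa [abs_of_nonneg] using this
    rw [integrable_const_iff] at hconst
    rcases hconst with h | h
    · norm_num at h
    · have h := h.measure_univ_lt_top
      rw [Measure.restrict_apply_univ, Real.volume_Iic] at h
      exact (lt_irrefl _ h).elim
  -- the auxiliary function g
  set g : ℝ → ℝ := fun s => Real.exp (-k * s) * (deriv f s + k * f s) with hg
  have hgderiv : ∀ x ∈ Iio s₀, HasDerivAt g
      (Real.exp (-k * x) * (deriv (deriv f) x - k ^ 2 * f x)) x := by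
    intro x hx
    have h0 : HasDerivAt (fun s => -k * s) (-k) x := by
      simpa using (hasDerivAt_id x).const_mul (-k)
    have h1 : HasDerivAt (fun s => Real.exp (-k * s)) (-k * Real.exp (-k * x)) x := by
      simpa [mul_comm] using h0.exp
    have h2 : HasDerivAt (fun s => deriv f s + k * f s)
        (deriv (deriv f) x + k * deriv f x) x := by
      exact ((hdiff' x hx).hasDerivAt).add (((hdiff x hx).hasDerivAt).const_mul k)
    have := h1.mul h2
    exact this.congr_deriv (by ring)
  have hgmono : MonotoneOn g (Iio s₀) := by
    apply monotoneOn_of_deriv_nonneg (convex_Iio s₀)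
    · exact fun x hx => ((hgderiv x hx).continuousAt).continuousWithinAt
    · intro x hx
      rw [interior_Iio] at hx
      exact (hgderiv x hx).differentiableAt.differentiableWithinAt
    · intro x hx
      rw [interior_Iio] at hx
      rw [(hgderiv x hx).deriv]
      have hq := hineq x (Set.mem_Iic.mpr hx.le)
      have he := Real.exp_pos (-k * x)
      nlinarith
  -- final bound
  set s₁ : ℝ := s₀ - 1 with hs₁
  have hs₁mem : s₁ ∈ Iio s₀ := Set.mem_Iio.mpr (by simp only [hs₁]; linarith)
  set C : ℝ := g s₁ with hC
  have hbound : ∀ s ≤ s₁, k * f s ≤ C * Real.exp (k * s) := by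
    intro s hs
    have hsmem : s ∈ Iio s₀ := Set.mem_Iio.mpr (by simp only [hs₁] at hs; linarith)
    have hgs : g s ≤ C := hgmono hsmem hs₁mem hs
    have hd := hderiv_nonneg s hsmem
    have he : Real.exp (-k * s) * Real.exp (k * s) = 1 := by
      rw [← Real.exp_add]; simp
    have h2 : Real.exp (-k * s) * (deriv f s + k * f s) ≤ C := hgs
    have h3 := mul_le_mul_of_nonneg_right h2 (Real.exp_pos (k * s)).le
    have h4 : deriv f s + k * f s ≤ C * Real.exp (k * s) := by
      calc deriv f s + k * f s
          = Real.exp (-k * s) * (deriv f s + k * f s) * Real.exp (k * s) := by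
            rw [mul_comm (Real.exp (-k * s)) _, mul_assoc, he, mul_one]
        _ ≤ C * Real.exp (k * s) := h3
    linarith
  -- squeeze
  have hub : Tendsto (fun s => (C / k) * Real.exp ((k - j) * s)) atBot (nhds 0) := by
    have h1 : Tendsto (fun s : ℝ => (k - j) * s) atBot atBot :=
      tendsto_id.const_mul_atBot (by linarith)
    have h2 : Tendsto (fun s => Real.exp ((k - j) * s)) atBot (nhds 0) :=
      Real.tendsto_exp_atBot.comp h1
    simpa using h2.const_mul (C / k)
  apply tendsto_of_tendsto_of_tendsto_of_le_of_le' tendsto_const_nhds hub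
  · filter_upwards [eventually_le_atBot s₁] with s hs
    have hsmem : s ∈ Iio s₀ := Set.mem_Iio.mpr (by simp only [hs₁] at hs; linarith)
    exact mul_nonneg (Real.exp_pos _).le (hfpos s (Set.mem_Iic.mpr (Set.mem_Iio.mp hsmem).le))
  · filter_upwards [eventually_le_atBot s₁] with s hs
    have hb := hbound s hs
    have : f s ≤ (C / k) * Real.exp (k * s) := by
      rw [div_mul_eq_mul_div, le_div_iff₀ hk]; linarith
    calc Real.exp (-j * s) * f s ≤ Real.exp (-j * s) * ((C / k) * Real.exp (k * s)) :=
          mul_le_mul_of_nonneg_left this (Real.exp_pos _).le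
    _ = (C / k) * (Real.exp (-j * s) * Real.exp (k * s)) := by ring
    _ = (C / k) * Real.exp ((k - j) * s) := by rw [← Real.exp_add]; ring_nf
end

section
/- Let r : ℝ → ℝ be continuous and Lebesgue integrable, M > 0, and let v be a nonzero C² solution of v'' = (−M + r) v on [0,∞) with v(0) = 0. Suppose v admits a Prüfer-type representation v(s) = A(s)·sin(√M s + δ(s)) with A, δ ∈ C¹ bounded, A > 0 (or A < 0) and δ' > 0. Then the number N(a) of zeros of v in [0, a] satisfies N(a) = (√M/π)·a + O(1) uniformly in a: there is a constant C with |N(a) − √M a/π| ≤ C for all a ≥ 0. -/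
open Set Filter MeasureTheory

/-- Zero counting for a Sturm–Liouville solution.  If `v` is a
nonzero `C²` solution of `v'' = (-M + r)v` on `[0,∞)` with `v(0) = 0`, `r`
continuous and integrable, admitting an amplitude–phase representation
`v(s) = A(s) sin(√M s + δ(s))` with `A, δ` bounded `C¹`, `A` nonvanishing and
`δ' > 0`, then the number `N(a)` of zeros of `v` in `[0,a]` satisfies
`N(a) = (√M/π) a + O(1)` uniformly in `a`. -/
theorem zero_counting_sturm_liouville
    (M : ℝ) (hM : 0 < M) (r v A δ : ℝ → ℝ)
    (hr : Continuous r) (hri : Integrable r)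
    (hv : ContDiff ℝ 2 v) (hvne : v ≠ 0) (hv0 : v 0 = 0)
    (hode : ∀ s : ℝ, 0 ≤ s → deriv (deriv v) s = (-M + r s) * v s)
    (hA : ContDiff ℝ 1 A) (hδ : ContDiff ℝ 1 δ)
    (hbdd : ∃ C : ℝ, ∀ s : ℝ, |A s| ≤ C ∧ |δ s| ≤ C)
    (hAne : ∀ s : ℝ, A s ≠ 0) (hδ' : ∀ s : ℝ, 0 < deriv δ s)
    (hrep : ∀ s : ℝ, 0 ≤ s → v s = A s * Real.sin (Real.sqrt M * s + δ s)) :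
    ∃ C > (0:ℝ), ∀ a : ℝ, 0 ≤ a →
      |(({s ∈ Set.Icc 0 a | v s = 0}.ncard : ℝ)) - Real.sqrt M * a / Real.pi|
        ≤ C := by
  obtain ⟨C, hC⟩ := hbdd
  have hC0 : 0 ≤ C := le_trans (abs_nonneg _) (hC 0).2
  have hπ : 0 < Real.pi := Real.pi_pos
  have hsqrt : 0 < Real.sqrt M := Real.sqrt_pos.mpr hM
  set φ : ℝ → ℝ := fun s => Real.sqrt M * s + δ s with hφdef
  have hδdiff : Differentiable ℝ δ := hδ.differentiable one_ne_zero
  have hφderiv : ∀ s, HasDerivAt φ (Real.sqrt M + deriv δ s) s := by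
    intro s
    have h1 : HasDerivAt (fun s : ℝ => Real.sqrt M * s) (Real.sqrt M) s := by
      simpa using (hasDerivAt_id s).const_mul (Real.sqrt M)
    exact h1.add (hδdiff s).hasDerivAt
  have hφmono : StrictMono φ := by
    apply strictMono_of_deriv_pos
    intro s
    rw [(hφderiv s).deriv]
    linarith [hδ' s]
  have hφcont : Continuous φ := by
    exact (continuous_const.mul continuous_id).add hδ.continuous
  refine ⟨2 + 2 * C / Real.pi, by positivity, ?_⟩
  intro a ha
  set m : ℤ := ⌈φ 0 / Real.pi⌉ with hm
  set n : ℤ := ⌊φ a / Real.pi⌋ with hn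
  -- the zero set maps bijectively onto integer multiples of π in [φ 0, φ a]
  have hZcard : ({s ∈ Set.Icc 0 a | v s = 0}).ncard = (n + 1 - m).toNat := by
    have himg : φ '' {s ∈ Set.Icc 0 a | v s = 0}
        = (fun k : ℤ => (k : ℝ) * Real.pi) '' ↑(Finset.Icc m n) := by
      ext x
      simp only [Set.mem_image, Set.mem_setOf_eq, Finset.coe_Icc, Set.mem_Icc]
      constructor
      · rintro ⟨s, ⟨hs, hvs⟩, rfl⟩
        have hsin : Real.sin (φ s) = 0 := by
          have h := hrep s hs.1
          rw [h] at hvs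
          rcases mul_eq_zero.mp hvs with h' | h'
          · exact absurd h' (hAne s)
          · exact h'
        obtain ⟨k, hk⟩ := Real.sin_eq_zero_iff.mp hsin
        refine ⟨k, ⟨?_, ?_⟩, hk⟩
        · rw [hm, Int.ceil_le, div_le_iff₀ hπ, hk]
          exact hφmono.monotone hs.1
        · rw [hn, Int.le_floor, le_div_iff₀ hπ, hk]
          exact hφmono.monotone hs.2
      · rintro ⟨k, ⟨hk1, hk2⟩, rfl⟩
        have h1 : φ 0 ≤ (k : ℝ) * Real.pi := by
          have := Int.le_ceil (φ 0 / Real.pi)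
          have h' : (m : ℝ) ≤ (k : ℝ) := by exact_mod_cast hk1
          calc φ 0 ≤ (m : ℝ) * Real.pi := by
                rw [← div_le_iff₀ hπ]; exact (Int.le_ceil _).trans (le_of_eq (by rw [hm]))
            _ ≤ (k : ℝ) * Real.pi := by nlinarith
        have h2 : (k : ℝ) * Real.pi ≤ φ a := by
          have h' : (k : ℝ) ≤ (n : ℝ) := by exact_mod_cast hk2
          calc (k : ℝ) * Real.pi ≤ (n : ℝ) * Real.pi := by nlinarith
            _ ≤ φ a := by
                rw [← le_div_iff₀ hπ]; exact (le_of_eq (by rw [hn])).trans (Int.floor_le _)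
        obtain ⟨s, hs, hφs⟩ := intermediate_value_Icc ha hφcont.continuousOn ⟨h1, h2⟩
        refine ⟨s, ⟨hs, ?_⟩, hφs⟩
        rw [hrep s hs.1]
        have : Real.sqrt M * s + δ s = (k : ℝ) * Real.pi := hφs
        rw [this, Real.sin_int_mul_pi, mul_zero]
    have hinj : Function.Injective (fun k : ℤ => (k : ℝ) * Real.pi) := by
      intro j k hjk
      have : (j : ℝ) = (k : ℝ) := mul_right_cancel₀ (ne_of_gt hπ) hjk
      exact_mod_cast this
    calc ({s ∈ Set.Icc 0 a | v s = 0}).ncard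
        = (φ '' {s ∈ Set.Icc 0 a | v s = 0}).ncard :=
          (Set.ncard_image_of_injective _ hφmono.injective).symm
      _ = ((fun k : ℤ => (k : ℝ) * Real.pi) '' ↑(Finset.Icc m n)).ncard := by rw [himg]
      _ = (↑(Finset.Icc m n) : Set ℤ).ncard := Set.ncard_image_of_injective _ hinj
      _ = (Finset.Icc m n).card := Set.ncard_coe_finset _
      _ = (n + 1 - m).toNat := Int.card_Icc m n
  rw [hZcard]
  -- numeric estimates
  have hmu : (m : ℝ) < φ 0 / Real.pi + 1 := Int.ceil_lt_add_one _
  have hml : φ 0 / Real.pi ≤ (m : ℝ) := Int.le_ceil _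
  have hnu : (n : ℝ) ≤ φ a / Real.pi := Int.floor_le _
  have hnl : φ a / Real.pi - 1 < (n : ℝ) := Int.sub_one_lt_floor _
  have hkey : φ a / Real.pi - φ 0 / Real.pi - Real.sqrt M * a / Real.pi
      = (δ a - δ 0) / Real.pi := by
    rw [hφdef]
    field_simp
    ring
  have hd : |(δ a - δ 0) / Real.pi| ≤ 2 * C / Real.pi := by
    rw [abs_div, abs_of_pos hπ, div_le_div_iff_of_pos_right hπ]
    calc |δ a - δ 0| ≤ |δ a| + |δ 0| := abs_sub _ _
      _ ≤ 2 * C := by linarith [(hC a).2, (hC 0).2]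
  obtain ⟨hd1, hd2⟩ := abs_le.mp hd
  rcases le_or_gt m n with hmn | hmn
  · have hN : (((n + 1 - m).toNat : ℕ) : ℝ) = (n : ℝ) + 1 - (m : ℝ) := by
      have h0 : (0:ℤ) ≤ n + 1 - m := by omega
      exact_mod_cast congrArg (fun z : ℤ => (z : ℝ)) (Int.toNat_of_nonneg h0)
    rw [hN, abs_le]
    constructor <;> linarith
  · have hN : (n + 1 - m).toNat = 0 := by omega
    rw [hN]
    have hmn' : (n : ℝ) + 1 ≤ (m : ℝ) := by exact_mod_cast hmn
    have hpos : 0 ≤ Real.sqrt M * a / Real.pi := by positivity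
    rw [abs_le]
    constructor <;> push_cast <;> linarith
end
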